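/- With the grid-based cover {K_i}_{0≤i<M} of the Delaunay triangulation D(X), a simplex σ lies in the intersection ∩_{j∈J} K_j (for J ⊆ {0,...,M−1} with #J ≥ 2) if and only if σ is a boundary simplex of K_j for every j ∈ J. -/

import Mathlib

/-!
A simplex of `K_j` is either a boundary simplex of `K_j` or has all its vertices in `X_j`.
In the second case, if it also lies in `K_k` for some `k ≠ j`, the triangle witnessing this
has a vertex in `X_k`, which is not in `X_j` since the zones are disjoint; that triangle also
contains the simplex and hence a vertex of `X_j`, so it is a boundary triangle of `B_j`.
-/

/-- The cover element `K_i`: the subcomplex of the Delaunay triangulation `D` (given by its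
set of simplices, each a face of a triangle) consisting of all inner and boundary triangles
of the zone `B_i` (i.e. triangles with at least one vertex in `X_i = Z i`) together with
their faces. -/
def KCov {V : Type*} {M : ℕ} (D : Finset (Finset V)) (Z : Fin M → Finset V) (i : Fin M) :
    Set (Finset V) :=
  {σ | σ.Nonempty ∧ ∃ t, t ∈ D ∧ t.card = 3 ∧ (∃ v ∈ t, v ∈ Z i) ∧ σ ⊆ t}

/-- `σ` is a boundary simplex of `K_i`: a face of a boundary triangle of `B_i`, i.e. of a
triangle some but not all of whose vertices lie in `X_i = Z i`. -/
def BoundarySimplex {V : Type*} {M : ℕ} (D : Finset (Finset V)) (Z : Fin M → Finset V)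
    (i : Fin M) (σ : Finset V) : Prop :=
  σ.Nonempty ∧ ∃ t, t ∈ D ∧ t.card = 3 ∧ (∃ v ∈ t, v ∈ Z i) ∧ (∃ v ∈ t, v ∉ Z i) ∧ σ ⊆ t

section

variable {V : Type*} {M : ℕ} {D : Finset (Finset V)} {Z : Fin M → Finset V}

theorem BoundarySimplex.mem_kCov {j : Fin M} {σ : Finset V}
    (h : BoundarySimplex D Z j σ) : σ ∈ KCov D Z j :=
  let ⟨hne, t, htD, hcard, hin, _, hsub⟩ := h
  ⟨hne, t, htD, hcard, hin, hsub⟩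

theorem boundarySimplex_or_subset_of_mem_kCov {j : Fin M} {σ : Finset V}
    (h : σ ∈ KCov D Z j) : BoundarySimplex D Z j σ ∨ σ ⊆ Z j := by
  obtain ⟨hne, t, htD, hcard, hin, hsub⟩ := h
  by_cases ht : t ⊆ Z j
  · exact .inr (hsub.trans ht)
  · exact .inl ⟨hne, t, htD, hcard, hin, Finset.not_subset.mp ht, hsub⟩

theorem boundarySimplex_of_subset_of_mem_kCov {j k : Fin M} {σ : Finset V}
    (hdisj : ∀ t ∈ D, ∀ v ∈ t, v ∈ Z k → v ∉ Z j)
    (hσj : σ ⊆ Z j) (hσk : σ ∈ KCov D Z k) : BoundarySimplex D Z j σ := by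
  obtain ⟨⟨x, hx⟩, t, htD, hcard, ⟨w, hwt, hwk⟩, hsub⟩ := hσk
  exact ⟨⟨x, hx⟩, t, htD, hcard, ⟨x, hsub hx, hσj hx⟩, ⟨w, hwt, hdisj t htD w hwt hwk⟩, hsub⟩

theorem boundarySimplex_of_mem_kCov_of_mem_kCov {j k : Fin M} {σ : Finset V}
    (hdisj : ∀ t ∈ D, ∀ v ∈ t, v ∈ Z k → v ∉ Z j)
    (hσj : σ ∈ KCov D Z j) (hσk : σ ∈ KCov D Z k) : BoundarySimplex D Z j σ :=
  (boundarySimplex_or_subset_of_mem_kCov hσj).elim id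
    fun hsub => boundarySimplex_of_subset_of_mem_kCov hdisj hsub hσk

end

theorem mem_inter_iff_boundarySimplex {V : Type*} {M : ℕ}
    (D : Finset (Finset V)) (Z : Fin M → Finset V)
    (hpart : ∀ t ∈ D, ∀ v ∈ t, ∃! i : Fin M, v ∈ Z i)
    (J : Finset (Fin M)) (hJ : 2 ≤ J.card) (σ : Finset V) :
    (∀ j ∈ J, σ ∈ KCov D Z j) ↔ (∀ j ∈ J, BoundarySimplex D Z j σ) := by
  refine ⟨fun h j hj => ?_, fun h j hj => (h j hj).mem_kCov⟩
  obtain ⟨k, hk, hkj⟩ := Finset.exists_mem_ne hJ j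
  have hdisj : ∀ t ∈ D, ∀ v ∈ t, v ∈ Z k → v ∉ Z j := fun t ht v hv hvk hvj =>
    hkj ((hpart t ht v hv).unique hvk hvj)
  exact boundarySimplex_of_mem_kCov_of_mem_kCov hdisj (h j hj) (h k hk)
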